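/- arXiv:2103.04061 — 6 statements merged into one kernel-verified Lean document; each statement's English description precedes it below -/
import Mathlib

section
/- Let A be a finite group acting by automorphisms on a finite group G with gcd(|G|, |A|) = 1. Then [G, A, A] = [G, A], where [G,A] is the subgroup generated by all g⁻¹·(g^a) for g ∈ G, a ∈ A. -/
/-- For a group `A` acting on `G` via `φ : A →* MulAut G` and a subgroup `S ≤ G`,
the subgroup `[S, A]` generated by the elements `g⁻¹ · (g^a)`, `g ∈ S`, `a ∈ A`. -/
def actionCommutator {G A : Type*} [Group G] [Group A] (φ : A →* MulAut G)
    (S : Subgroup G) : Subgroup G :=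
  Subgroup.closure {x : G | ∃ g ∈ S, ∃ a : A, x = g⁻¹ * φ a g}

section Aux
variable {G A : Type*} [Group G] [Group A] (φ : A →* MulAut G)

lemma mem_actionCommutator {S : Subgroup G} {g : G} (hg : g ∈ S) (a : A) :
    g⁻¹ * φ a g ∈ actionCommutator φ S :=
  Subgroup.subset_closure ⟨g, hg, a, rfl⟩

lemma actionCommutator_apply_mem {S : Subgroup G}
    (hS : ∀ (a : A) (x : G), x ∈ S → φ a x ∈ S) (a : A) {x : G}
    (hx : x ∈ actionCommutator φ S) : φ a x ∈ actionCommutator φ S := by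
  induction hx using Subgroup.closure_induction with
  | mem y hy =>
      obtain ⟨g, hg, b, rfl⟩ := hy
      have key : φ a (g⁻¹ * φ b g) = (φ a g)⁻¹ * φ (a * b * a⁻¹) (φ a g) := by
        simp [map_mul, mul_assoc]
      rw [key]
      exact mem_actionCommutator φ (hS a g hg) _
  | one => simpa using (actionCommutator φ S).one_mem
  | mul y z hy hz ihy ihz => simpa [map_mul] using (actionCommutator φ S).mul_mem ihy ihz
  | inv y hy ih => simpa [map_inv] using (actionCommutator φ S).inv_mem ih

lemma actionCommutator_top_apply_mem (a : A) {x : G}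
    (hx : x ∈ actionCommutator φ (⊤ : Subgroup G)) :
    φ a x ∈ actionCommutator φ (⊤ : Subgroup G) :=
  actionCommutator_apply_mem φ (fun _ x _ => Subgroup.mem_top _) a hx

lemma key_prime_pow [Finite G] [Finite A] {p k : ℕ} (hp : p.Prime)
    (hpG : ¬ p ∣ Nat.card G) {b : A} (hb : b ^ p ^ k = 1) (g : G) :
    g⁻¹ * φ b g ∈ actionCommutator φ (actionCommutator φ (⊤ : Subgroup G)) := by
  set K := actionCommutator φ (⊤ : Subgroup G) with hKdef
  have hKinv : ∀ (a : A) (x : G), x ∈ K → φ a x ∈ K := fun a x hx =>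
    actionCommutator_top_apply_mem φ a hx
  have hmem : ∀ (a : A) (x : ↥K), (g⁻¹ * φ a g) * φ a (x : G) ∈ K := fun a x =>
    K.mul_mem (mem_actionCommutator φ (Subgroup.mem_top g) a) (hKinv a x x.2)
  letI : SMul A ↥K := ⟨fun a x => ⟨(g⁻¹ * φ a g) * φ a (x : G), hmem a x⟩⟩
  have smul_def : ∀ (a : A) (x : ↥K), ((a • x : ↥K) : G) = (g⁻¹ * φ a g) * φ a (x : G) :=
    fun _ _ => rfl
  letI : MulAction A ↥K :=
    { one_smul := fun x => by
        ext
        simp [smul_def]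
      mul_smul := fun a b x => by
        ext
        simp [smul_def, map_mul, mul_assoc] }
  let S := Subgroup.zpowers b
  letI : MulAction ↥S ↥K := MulAction.compHom ↥K S.subtype
  have hS : IsPGroup p ↥S := by
    rintro ⟨x, hx⟩
    obtain ⟨i, rfl⟩ := Subgroup.mem_zpowers_iff.mp hx
    refine ⟨k, ?_⟩
    ext
    push_cast
    rw [← zpow_natCast (b ^ i), ← zpow_mul, mul_comm, zpow_mul, zpow_natCast, hb, one_zpow]
  haveI := Fact.mk hp
  have hfix := hS.card_modEq_card_fixedPoints (↥K)
  have hne : Nonempty (MulAction.fixedPoints ↥S ↥K) := by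
    by_contra h
    rw [not_nonempty_iff] at h
    have h0 : Nat.card (MulAction.fixedPoints ↥S ↥K) = 0 := Nat.card_of_isEmpty
    rw [h0] at hfix
    have hdvd : p ∣ Nat.card ↥K := (Nat.modEq_zero_iff_dvd).mp hfix
    exact hpG (hdvd.trans (Subgroup.card_subgroup_dvd_card K))
  obtain ⟨⟨x₀, hx₀⟩⟩ := hne
  have h1 : (g⁻¹ * φ b g) * φ b (x₀ : G) = (x₀ : G) := by
    have := hx₀ ⟨b, Subgroup.mem_zpowers b⟩
    exact congrArg Subtype.val this
  have h2 : g⁻¹ * φ b g = ((x₀ : G)⁻¹)⁻¹ * φ b ((x₀ : G)⁻¹) := by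
    rw [map_inv, inv_inv, eq_mul_inv_of_mul_eq h1]
  rw [h2]
  exact mem_actionCommutator φ (K.inv_mem x₀.2) b

lemma telescope (x y : A) (g : G) :
    g⁻¹ * φ (x * y) g = (g⁻¹ * φ x g) * φ x (g⁻¹ * φ y g) := by
  simp only [map_mul, map_inv, MulAut.mul_apply]
  group

variable [Finite G] [Finite A]


lemma main_mem     (hcop : Nat.Coprime (Nat.card G) (Nat.card A)) :
    ∀ (N : ℕ) (b : A), orderOf b = N → ∀ g : G,
      g⁻¹ * φ b g ∈ actionCommutator φ (actionCommutator φ (⊤ : Subgroup G)) := by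
  intro N
  induction N using Nat.strong_induction_on with
  | _ N ih =>
    intro b hbN g
    have hN0 : N ≠ 0 := by
      rw [← hbN]; exact (orderOf_pos b).ne'
    rcases eq_or_lt_of_le (Nat.one_le_iff_ne_zero.mpr hN0) with h1 | h1
    · have hb1 : b = 1 := orderOf_eq_one_iff.mp (hbN.trans h1.symm)
      simpa [hb1] using Subgroup.one_mem _
    · set p := N.minFac with hpdef
      have hp : p.Prime := Nat.minFac_prime (by omega)
      have hpN : p ∣ N := N.minFac_dvd
      have hNA : N ∣ Nat.card A := hbN ▸ orderOf_dvd_natCard b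
      have hpG : ¬ p ∣ Nat.card G := by
        intro hdvd
        have hgcd : p ∣ Nat.gcd (Nat.card G) (Nat.card A) :=
          Nat.dvd_gcd hdvd (hpN.trans hNA)
        rw [Nat.Coprime] at hcop
        rw [hcop] at hgcd
        exact hp.ne_one (Nat.dvd_one.mp hgcd)
      set m := p ^ N.factorization p with hmdef
      have hmN : m ∣ N := Nat.ordProj_dvd N p
      set n := N / m with hndef
      have hNmn : m * n = N := Nat.ordProj_mul_ordCompl_eq_self N p
      have hcomn : Nat.Coprime m n :=
        Nat.Coprime.pow_left _ (Nat.coprime_ordCompl hp hN0)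
      have hn0 : n ≠ 0 := by
        intro h; rw [h, mul_zero] at hNmn; exact hN0 hNmn.symm
      have hnpos : 0 < n := Nat.pos_of_ne_zero hn0
      have hm1 : 1 < m := by
        have hk : 0 < N.factorization p := hp.factorization_pos_of_dvd hN0 hpN
        calc 1 < p := hp.one_lt
        _ ≤ p ^ N.factorization p := Nat.le_self_pow hk.ne' p
      by_cases hn : n = 1
      · -- prime power case
        refine key_prime_pow φ hp hpG (k := N.factorization p) ?_ g
        have : b ^ N = 1 := hbN ▸ pow_orderOf_eq_one b
        rw [← hNmn, hn, mul_one] at this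
        exact this
      · have hn1 : 1 < n := by omega
        set e := m ^ n.totient with hedef
        set f := n ^ m.totient with hfdef
        have hef : e + f ≡ 1 [MOD N] := by
          have h1m : e + f ≡ 0 + 1 [MOD m] :=
            Nat.ModEq.add
              ((Nat.modEq_zero_iff_dvd).mpr (dvd_pow_self m (Nat.totient_pos.mpr hnpos).ne'))
              (Nat.ModEq.pow_totient hcomn.symm)
          have h2n : e + f ≡ 1 + 0 [MOD n] :=
            Nat.ModEq.add (Nat.ModEq.pow_totient hcomn)
              ((Nat.modEq_zero_iff_dvd).mpr (dvd_pow_self n (Nat.totient_pos.mpr (Nat.zero_lt_of_lt hm1)).ne'))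
          have := (Nat.modEq_and_modEq_iff_modEq_mul hcomn).mp
            ⟨by simpa using h1m, by simpa using h2n⟩
          rw [hNmn] at this
          simpa using this
        have hsplit : b = b ^ e * b ^ f := by
          have : b ^ (e + f) = b ^ 1 := by
            rw [pow_eq_pow_iff_modEq, hbN]
            exact hef
          rw [← pow_add, this, pow_one]
        have h1' : orderOf (b ^ e) ∣ n := by
          apply orderOf_dvd_of_pow_eq_one
          rw [← pow_mul]
          apply orderOf_dvd_iff_pow_eq_one.mp
          rw [hbN, ← hNmn]
          exact mul_dvd_mul_right (dvd_pow_self m (Nat.totient_pos.mpr hnpos).ne') n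
        have h2' : orderOf (b ^ f) ∣ m := by
          apply orderOf_dvd_of_pow_eq_one
          rw [← pow_mul]
          apply orderOf_dvd_iff_pow_eq_one.mp
          rw [hbN, ← hNmn, mul_comm m n]
          exact mul_dvd_mul_right (dvd_pow_self n (Nat.totient_pos.mpr (Nat.zero_lt_of_lt hm1)).ne') m
        have hlt1 : orderOf (b ^ e) < N := by
          have := Nat.le_of_dvd (by omega) h1'
          calc orderOf (b ^ e) ≤ n := this
          _ < m * n := (lt_mul_iff_one_lt_left hnpos).mpr hm1
          _ = N := hNmn
        have hlt2 : orderOf (b ^ f) < N := by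
          have := Nat.le_of_dvd (by omega) h2'
          calc orderOf (b ^ f) ≤ m := this
          _ < m * n := (lt_mul_iff_one_lt_right (Nat.zero_lt_of_lt hm1)).mpr hn1
          _ = N := hNmn
        have ihe := ih _ hlt1 (b ^ e) rfl g
        have ihf := ih _ hlt2 (b ^ f) rfl g
        rw [show b = b ^ e * b ^ f from hsplit, telescope φ]
        refine Subgroup.mul_mem _ ihe ?_
        exact actionCommutator_apply_mem φ
          (fun a x hx => actionCommutator_top_apply_mem φ a hx) _ ihf

end Aux

/-- Coprime action lemma: if finite `A` acts on finite `G` with coprime orders,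
then `[G, A, A] = [G, A]`. -/
theorem stmt_1 {G A : Type*} [Group G] [Group A] [Finite G] [Finite A]
    (φ : A →* MulAut G)
    (hcop : Nat.Coprime (Nat.card G) (Nat.card A)) :
    actionCommutator φ (actionCommutator φ (⊤ : Subgroup G)) =
      actionCommutator φ (⊤ : Subgroup G) := by
  apply le_antisymm
  · show Subgroup.closure _ ≤ _
    rw [Subgroup.closure_le]
    rintro x ⟨k, hk, a, rfl⟩
    exact Subgroup.mul_mem _ (Subgroup.inv_mem _ hk) (actionCommutator_top_apply_mem φ a hk)
  · show Subgroup.closure _ ≤ _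
    rw [Subgroup.closure_le]
    rintro x ⟨g, -, a, rfl⟩
    exact main_mem φ hcop (orderOf a) a rfl g
end

section
/- Let G = QH be a finite group where Q is a normal nilpotent subgroup, H a subgroup with gcd(|Q|,|H|) = 1, and suppose Q = [Q,H]. If p is a prime with p > m and |Q : C_Q(x)| ≤ m for all x ∈ H, then the Sylow p-subgroup P of Q satisfies [P,H] = 1, i.e., H acts trivially on P. -/
/-- If `G = QH` is finite with `Q` normal nilpotent, `gcd(|Q|,|H|) = 1`,
`Q = [Q,H]`, and `|Q : C_Q(x)| ≤ m` for all `x ∈ H`, then for any prime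
`p > m` the Sylow `p`-subgroup `P` of `Q` satisfies `[P,H] = 1`. -/
theorem stmt_4 (m : ℕ) {G : Type*} [Group G] [Finite G] (Q H : Subgroup G)
    [Q.Normal] (hnil : Group.IsNilpotent Q) (hprod : Q ⊔ H = ⊤)
    (hcop : Nat.Coprime (Nat.card Q) (Nat.card H))
    (hQH : ⁅Q, H⁆ = Q)
    (hind : ∀ x ∈ H, (Subgroup.centralizer {x}).relIndex Q ≤ m)
    (p : ℕ) [Fact p.Prime] (hpm : m < p) (P : Sylow p Q) :
    ⁅(P : Subgroup Q).map Q.subtype, H⁆ = (⊥ : Subgroup G) := by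
  have hp : p.Prime := Fact.out
  set P' : Subgroup G := (P : Subgroup Q).map Q.subtype with hP'
  have hP'pgroup : IsPGroup p P' := (P.2).map Q.subtype
  obtain ⟨n, hn⟩ := hP'pgroup.exists_card_eq
  have hP'leQ : P' ≤ Q := Subgroup.map_subtype_le _
  rw [Subgroup.commutator_eq_bot_iff_le_centralizer]
  intro g hg
  rw [Subgroup.mem_centralizer_iff]
  intro x hx
  set C := Subgroup.centralizer ({x} : Set G) with hC
  have hQne : C.relIndex Q ≠ 0 := Subgroup.index_ne_zero_of_finite
  have hle : C.relIndex P' ≤ C.relIndex Q :=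
    Subgroup.relIndex_le_of_le_right hP'leQ hQne
  have hlt : C.relIndex P' < p := lt_of_le_of_lt (hle.trans (hind x hx)) hpm
  have hdvd : C.relIndex P' ∣ p ^ n := hn ▸ Subgroup.index_dvd_card (H := C.subgroupOf P')
  have hone : C.relIndex P' = 1 := by
    have hne : C.relIndex P' ≠ 0 := Subgroup.index_ne_zero_of_finite
    have hcop' : Nat.Coprime (C.relIndex P') p :=
      ((Nat.Prime.coprime_iff_not_dvd hp).mpr fun h =>
        absurd (Nat.le_of_dvd (Nat.pos_of_ne_zero hne) h) (not_le.mpr hlt)).symm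
    exact Nat.Coprime.eq_one_of_dvd (hcop'.pow_right n) hdvd
  have hmem : g ∈ C := Subgroup.relIndex_eq_one.mp hone hg
  exact Subgroup.mem_centralizer_iff.mp hmem x rfl
end

section
/- Let G be a finite nilpotent group and g, h ∈ G. Then there exist elements g₁, h₁ ∈ G such that [g,h] = [g₁,h₁] and the sets of prime divisors of the orders of g₁ and h₁ are equal. -/
/-- In a finite nilpotent group, elements of coprime order commute. -/
lemma aux_commute_of_coprime {G : Type*} [Group G] [Finite G]
    (hnil : Group.IsNilpotent G) {x y : G}
    (hxy : Nat.Coprime (orderOf x) (orderOf y)) : Commute x y := by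
  obtain ⟨e⟩ := ((isNilpotent_of_finite_tfae (G := G)).out 0 4).mp hnil
  have hx := e.apply_symm_apply x
  have hy := e.apply_symm_apply y
  rw [← hx, ← hy]
  refine Commute.map ?_ e.toMonoidHom
  have comp_one : ∀ (z : G) (p : (Nat.card G).primeFactors) (P : Sylow (p : ℕ) G),
      ¬ (p : ℕ) ∣ orderOf z → e.symm z p P = 1 := by
    intro z p P hpz
    have hp : (p : ℕ).Prime := Nat.prime_of_mem_primeFactors p.2
    set u := e.symm z p P with hu
    obtain ⟨k, hk⟩ := P.isPGroup' u
    have h1 : orderOf u ∣ (p : ℕ) ^ k := orderOf_dvd_of_pow_eq_one hk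
    have h2 : orderOf u ∣ orderOf z := by
      apply orderOf_dvd_of_pow_eq_one
      have : (e.symm z) ^ orderOf z = 1 := by
        rw [← map_pow, pow_orderOf_eq_one, map_one]
      have := congrFun (congrFun this p) P
      simpa using this
    obtain ⟨j, hj, hje⟩ := (Nat.dvd_prime_pow hp).mp h1
    rcases Nat.eq_zero_or_pos j with rfl | hj0
    · rw [pow_zero] at hje
      exact orderOf_eq_one_iff.mp hje
    · exfalso
      apply hpz
      calc (p : ℕ) ∣ orderOf u := hje ▸ dvd_pow_self _ hj0.ne'
        _ ∣ orderOf z := h2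
  funext p P
  simp only [Pi.mul_apply]
  by_cases hpx : (p : ℕ) ∣ orderOf x
  · have hpy : ¬ (p : ℕ) ∣ orderOf y := by
      intro hpy
      have hp : (p : ℕ).Prime := Nat.prime_of_mem_primeFactors p.2
      exact hp.one_lt.ne' (Nat.eq_one_of_dvd_coprimes hxy hpx hpy)
    rw [comp_one y p P hpy, mul_one, one_mul]
  · rw [comp_one x p P hpx, mul_one, one_mul]

/-- Decompose `g` into its `π(m)`-part and a part coprime to `m`. -/
lemma aux_exists_part {G : Type*} [Group G] [Finite G] (g : G) (m : ℕ) (hm : m ≠ 0) :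
    ∃ a b : G, g = a * b ∧ (∃ i, a = g ^ i) ∧ (∃ j, b = g ^ j) ∧
      (orderOf a).primeFactors = (orderOf g).primeFactors ∩ m.primeFactors ∧
      Nat.Coprime (orderOf b) m := by
  have hn : orderOf g ≠ 0 := (orderOf_pos g).ne'
  set n := orderOf g with hndef
  set d := Nat.gcd n (m ^ n) with hddef
  have hdn : d ∣ n := Nat.gcd_dvd_left _ _
  have hd0 : d ≠ 0 := fun h => hn (Nat.eq_zero_of_gcd_eq_zero_left h)
  set c := n / d with hcdef
  have hdc : d * c = n := Nat.mul_div_cancel' hdn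
  have hc0 : c ≠ 0 := by
    intro h
    rw [h, mul_zero] at hdc
    exact hn hdc.symm
  have hcn : c ∣ n := Nat.div_dvd_of_dvd hdn
  -- the key valuation fact
  have key : ∀ p : ℕ, p.Prime → p ∣ m → ¬ p ∣ c := by
    intro p pp hpm hpc
    have h1 : d.factorization p = n.factorization p := by
      rw [hddef, Nat.factorization_gcd hn (pow_ne_zero _ hm)]
      rw [Finsupp.inf_apply, Nat.factorization_pow, Finsupp.smul_apply]
      have hmp : 1 ≤ m.factorization p :=
        (Nat.Prime.factorization_pos_of_dvd pp hm hpm)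
      have : n.factorization p ≤ n • m.factorization p := by
        calc n.factorization p ≤ n := (Nat.factorization_lt p hn).le
          _ = n * 1 := (mul_one n).symm
          _ ≤ n * m.factorization p := Nat.mul_le_mul_left n hmp
          _ = n • m.factorization p := by simp
      exact min_eq_left this
    have h2 : c.factorization p = 0 := by
      rw [hcdef, Nat.factorization_div hdn, Finsupp.tsub_apply, h1, Nat.sub_self]
    have := Nat.Prime.factorization_pos_of_dvd pp hc0 hpc
    omega
  have hcm : Nat.Coprime c m := by
    rw [← Nat.disjoint_primeFactors hc0 hm]
    rw [Finset.disjoint_left]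
    intro p hpc hpm
    exact key p (Nat.prime_of_mem_primeFactors hpm) (Nat.dvd_of_mem_primeFactors hpm)
      (Nat.dvd_of_mem_primeFactors hpc)
  have hcd : Nat.Coprime c d := by
    rw [← Nat.disjoint_primeFactors hc0 hd0]
    rw [Finset.disjoint_left]
    intro p hpc hpd
    have hpm : p ∣ m := by
      have : p ∣ m ^ n := (Nat.dvd_of_mem_primeFactors hpd).trans (Nat.gcd_dvd_right _ _)
      exact (Nat.prime_of_mem_primeFactors hpd).dvd_of_dvd_pow this
    exact key p (Nat.prime_of_mem_primeFactors hpd) hpm (Nat.dvd_of_mem_primeFactors hpc)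
  have htd : Nat.totient d ≠ 0 := (Nat.totient_pos.mpr (Nat.pos_of_ne_zero hd0)).ne'
  have htc : Nat.totient c ≠ 0 := (Nat.totient_pos.mpr (Nat.pos_of_ne_zero hc0)).ne'
  refine ⟨g ^ (c ^ Nat.totient d), g ^ (d ^ Nat.totient c), ?_, ⟨_, rfl⟩, ⟨_, rfl⟩, ?_, ?_⟩
  · -- g = a * b
    rw [← pow_add]
    nth_rewrite 1 [show g = g ^ 1 from (pow_one g).symm]
    rw [pow_eq_pow_iff_modEq]
    rw [← hndef, ← hdc, ← Nat.modEq_and_modEq_iff_modEq_mul hcd.symm]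
    constructor
    · -- mod d
      calc (1 : ℕ) ≡ c ^ Nat.totient d [MOD d] := (Nat.ModEq.pow_totient hcd).symm
        _ = c ^ Nat.totient d + 0 := (add_zero _).symm
        _ ≡ c ^ Nat.totient d + d ^ Nat.totient c [MOD d] := by
            refine Nat.ModEq.add_left _ ?_
            exact ((Nat.modEq_zero_iff_dvd).mpr (dvd_pow_self d htc)).symm
    · -- mod c
      calc (1 : ℕ) ≡ d ^ Nat.totient c [MOD c] := (Nat.ModEq.pow_totient hcd.symm).symm
        _ = 0 + d ^ Nat.totient c := (zero_add _).symm
        _ ≡ c ^ Nat.totient d + d ^ Nat.totient c [MOD c] := by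
            refine Nat.ModEq.add_right _ ?_
            exact ((Nat.modEq_zero_iff_dvd).mpr (dvd_pow_self c htd)).symm
  · -- prime factors of orderOf a
    have hgcd : Nat.gcd n (c ^ Nat.totient d) = c := by
      apply Nat.dvd_antisymm
      · have h2 : Nat.gcd n (c ^ Nat.totient d) ∣ c ^ Nat.totient d := Nat.gcd_dvd_right _ _
        have hco : Nat.Coprime (Nat.gcd n (c ^ Nat.totient d)) d :=
          Nat.Coprime.coprime_dvd_left h2 (hcd.pow_left _)
        have hdvd : Nat.gcd n (c ^ Nat.totient d) ∣ c * d := by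
          rw [mul_comm, hdc]; exact Nat.gcd_dvd_left _ _
        exact hco.dvd_of_dvd_mul_right hdvd
      · exact Nat.dvd_gcd hcn (dvd_pow_self c htd)
    have horder : orderOf (g ^ (c ^ Nat.totient d)) = d := by
      rw [orderOf_pow' g (pow_ne_zero _ hc0), ← hndef, hgcd]
      rw [← hdc, Nat.mul_div_cancel _ (Nat.pos_of_ne_zero hc0)]
    rw [horder, hddef, Nat.primeFactors_gcd hn (pow_ne_zero _ hm),
      Nat.primeFactors_pow m hn]
  · -- coprimality of orderOf b with m
    have hgcd : Nat.gcd n (d ^ Nat.totient c) = d := by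
      apply Nat.dvd_antisymm
      · have h2 : Nat.gcd n (d ^ Nat.totient c) ∣ d ^ Nat.totient c := Nat.gcd_dvd_right _ _
        have hco : Nat.Coprime (Nat.gcd n (d ^ Nat.totient c)) c :=
          Nat.Coprime.coprime_dvd_left h2 (hcd.symm.pow_left _)
        have hdvd : Nat.gcd n (d ^ Nat.totient c) ∣ d * c := by
          rw [hdc]; exact Nat.gcd_dvd_left _ _
        exact hco.dvd_of_dvd_mul_right hdvd
      · exact Nat.dvd_gcd hdn (dvd_pow_self d htc)
    have horder : orderOf (g ^ (d ^ Nat.totient c)) = c := by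
      rw [orderOf_pow' g (pow_ne_zero _ hd0), ← hndef, hgcd, hcdef]
    rw [horder]
    exact hcm

lemma aux_key_comm {G : Type*} [Group G] (x y u v : G)
    (hux : Commute u x) (huy : Commute u y) (huv : Commute u v)
    (hvx : Commute v x) (hvy : Commute v y) :
    (x * u)⁻¹ * (y * v)⁻¹ * (x * u) * (y * v) = x⁻¹ * y⁻¹ * x * y := by
  have hZ : Commute u (x⁻¹ * (v⁻¹ * (y⁻¹ * (x * (y * v))))) :=
    hux.inv_right.mul_right (huv.inv_right.mul_right (huy.inv_right.mul_right
      (hux.mul_right (huy.mul_right huv))))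
  have hW : Commute v (y⁻¹ * (x * y)) := hvy.inv_right.mul_right (hvx.mul_right hvy)
  simp only [mul_inv_rev, mul_assoc]
  rw [show u * (y * v) = (y * v) * u from (huy.mul_right huv).eq]
  simp only [mul_assoc]
  rw [show x⁻¹ * (v⁻¹ * (y⁻¹ * (x * (y * (v * u))))) =
      (x⁻¹ * (v⁻¹ * (y⁻¹ * (x * (y * v))))) * u by simp [mul_assoc]]
  rw [← hZ.eq, inv_mul_cancel_left]
  rw [show v⁻¹ * (y⁻¹ * (x * (y * v))) = v⁻¹ * ((y⁻¹ * (x * y)) * v) by simp [mul_assoc]]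
  rw [← hW.eq, inv_mul_cancel_left]

/-- In a finite nilpotent group every commutator is an anti-coprime commutator:
for all `g, h` there are `g₁, h₁` with `[g,h] = [g₁,h₁]` and the sets of prime
divisors of the orders of `g₁` and `h₁` equal. -/
theorem stmt_8 {G : Type*} [Group G] [Finite G] (hnil : Group.IsNilpotent G)
    (g h : G) :
    ∃ g₁ h₁ : G, g⁻¹ * h⁻¹ * g * h = g₁⁻¹ * h₁⁻¹ * g₁ * h₁ ∧
      (orderOf g₁).primeFactors = (orderOf h₁).primeFactors := by
  have hg0 : orderOf g ≠ 0 := (orderOf_pos g).ne'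
  have hh0 : orderOf h ≠ 0 := (orderOf_pos h).ne'
  obtain ⟨a, b, hgab, ⟨i, hi⟩, ⟨j, hj⟩, hpa, hcb⟩ := aux_exists_part g (orderOf h) hh0
  obtain ⟨a', b', hhab, ⟨i', hi'⟩, ⟨j', hj'⟩, hpa', hcb'⟩ := aux_exists_part h (orderOf g) hg0
  refine ⟨a, a', ?_, ?_⟩
  · -- commutator equality
    have hbh : Commute b h := aux_commute_of_coprime hnil hcb
    have hb'g : Commute b' g := aux_commute_of_coprime hnil hcb'
    have hba : Commute b a := by rw [hi, hj]; exact (Commute.refl g).pow_pow _ _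
    have hba' : Commute b a' := by rw [hi']; exact hbh.pow_right _
    have hbb' : Commute b b' := by rw [hj']; exact hbh.pow_right _
    have hb'a : Commute b' a := by rw [hi]; exact hb'g.pow_right _
    have hb'a' : Commute b' a' := by rw [hj', hi']; exact (Commute.refl h).pow_pow _ _
    rw [hgab, hhab]
    exact aux_key_comm a a' b b' hba hba' hbb' hb'a hb'a'
  · rw [hpa, hpa', Finset.inter_comm]
end

section
/- Let G be a finite group whose center Z(G) has finite index n in G. Then the derived subgroup G' is finite of order bounded in terms of n. (Schur's theorem, finite-index version.) -/
open scoped commutatorElement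

lemma commutator_eq_of_center {G : Type} [Group G] (a b : G) (z w : G)
    (hz : z ∈ Subgroup.center G) (hw : w ∈ Subgroup.center G) :
    ⁅a * z, b * w⁆ = ⁅a, b⁆ := by
  rw [Subgroup.mem_center_iff] at hz hw
  simp only [commutatorElement_def, mul_inv_rev]
  have e1 : z * (b * w * z⁻¹) = b * w := by rw [← hz]; group
  have e2 : w * (a⁻¹ * w⁻¹) = a⁻¹ := by rw [← hw]; group
  calc a * z * (b * w) * (z⁻¹ * a⁻¹) * (w⁻¹ * b⁻¹)
      = a * (z * (b * w * z⁻¹)) * a⁻¹ * (w⁻¹ * b⁻¹) := by group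
    _ = a * (b * w) * a⁻¹ * (w⁻¹ * b⁻¹) := by rw [e1]
    _ = a * b * (w * (a⁻¹ * w⁻¹)) * b⁻¹ := by group
    _ = a * b * a⁻¹ * b⁻¹ := by rw [e2]

lemma card_commutatorSet_le {G : Type} [Group G] [Finite G] :
    Nat.card (commutatorSet G) ≤ (Subgroup.center G).index ^ 2 := by
  have hsurj : Function.Surjective
      (fun p : (G ⧸ Subgroup.center G) × (G ⧸ Subgroup.center G) =>
        (⟨⁅p.1.out, p.2.out⁆, commutator_mem_commutatorSet _ _⟩ : commutatorSet G)) := by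
    rintro ⟨c, a, b, rfl⟩
    refine ⟨(↑a, ↑b), ?_⟩
    ext
    obtain ⟨z, hz⟩ := QuotientGroup.mk_out_eq_mul (Subgroup.center G) a
    obtain ⟨w, hw⟩ := QuotientGroup.mk_out_eq_mul (Subgroup.center G) b
    simp only [QuotientGroup.mk, hz, hw]
    exact commutator_eq_of_center a b z w z.2 w.2
  calc Nat.card (commutatorSet G)
      ≤ Nat.card ((G ⧸ Subgroup.center G) × (G ⧸ Subgroup.center G)) :=
        Nat.card_le_card_of_surjective _ hsurj
    _ = (Subgroup.center G).index ^ 2 := by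
        rw [Nat.card_prod, sq, Subgroup.index]

/-- Schur's theorem with a bound: there is `f : ℕ → ℕ` such that any finite
group whose center has index `n` has derived subgroup of order at most `f n`. -/
theorem stmt_10 :
    ∃ f : ℕ → ℕ, ∀ (G : Type) (_ : Group G) (_ : Finite G) (n : ℕ),
      (Subgroup.center G).index = n →
      Nat.card (commutator G) ≤ f n := by
  classical
  refine ⟨fun n => ((List.range (n ^ 2 + 1)).map Subgroup.cardCommutatorBound).foldr max ⊥,
    fun G _ _ n hn => ?_⟩
  have h1 : Nat.card (commutatorSet G) ≤ n ^ 2 := hn ▸ card_commutatorSet_le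
  have h2 := Subgroup.card_commutator_le_of_finite_commutatorSet (G := G)
  refine h2.trans ?_
  have hmem : Subgroup.cardCommutatorBound (Nat.card (commutatorSet G)) ∈
      (List.range (n ^ 2 + 1)).map Subgroup.cardCommutatorBound :=
    List.mem_map_of_mem (List.mem_range.mpr (Nat.lt_succ_of_le h1))
  exact List.le_max_of_le hmem le_rfl
end

section
/- Let G be a profinite group, H a closed subgroup, and x ∈ G. If the set {[x,h] : h ∈ H} has cardinality strictly less than 2^{ℵ₀}, then the centralizer C_H(x) has finite index in H. -/
open Subgroup

section Aux

variable {Γ : Type*} [Group Γ] [TopologicalSpace Γ] [IsTopologicalGroup Γ]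
    [CompactSpace Γ] [T2Space Γ] [TotallyDisconnectedSpace Γ]

/-- In a profinite group, if `t` is not in the closed subgroup `K`, there is an open
normal subgroup `N` with `t ∉ K ⊔ N`. -/
lemma aux_exists_openNormal_not_mem (K : Subgroup Γ) (hK : IsClosed (K : Set Γ))
    {t : Γ} (ht : t ∉ K) :
    ∃ N : OpenNormalSubgroup Γ, t ∉ K ⊔ N.toSubgroup := by
  have hF : IsClosed ((· * t⁻¹) ⁻¹' (K : Set Γ)) := hK.preimage (continuous_mul_right t⁻¹)
  have h1 : (1 : Γ) ∈ ((· * t⁻¹) ⁻¹' (K : Set Γ))ᶜ := by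
    intro h
    exact ht (by simpa using K.inv_mem h)
  obtain ⟨W, hW, h1W, hWsub⟩ := compact_exists_isClopen_in_isOpen hF.isOpen_compl h1
  obtain ⟨N, hN⟩ := IsTopologicalGroup.exist_openNormalSubgroup_sub_clopen_nhds_of_one hW h1W
  refine ⟨N, fun hmem => ?_⟩
  rw [← SetLike.mem_coe, Subgroup.mul_normal] at hmem
  obtain ⟨k, hk, n, hn, rfl⟩ := hmem
  refine hWsub (hN hn) ?_
  show n * (k * n)⁻¹ ∈ (K : Set Γ)
  have : n * (k * n)⁻¹ = k⁻¹ := by group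
  rw [this]
  exact K.inv_mem hk

/-- If a closed subgroup `K` of a profinite group has infinite index, then below any open
normal subgroup `N` one can find an open normal subgroup `N'` witnessing a strict descent
of `K ⊔ N`. -/
lemma aux_step (K : Subgroup Γ) (hK : IsClosed (K : Set Γ)) (hind : K.index = 0)
    (N : OpenNormalSubgroup Γ) :
    ∃ (N' : OpenNormalSubgroup Γ) (t : Γ), N'.toSubgroup ≤ N.toSubgroup ∧
      t ∈ K ⊔ N.toSubgroup ∧ t ∉ K ⊔ N'.toSubgroup := by
  have hMopen : IsOpen ((K ⊔ N.toSubgroup : Subgroup Γ) : Set Γ) :=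
    Subgroup.isOpen_mono (le_sup_right : N.toSubgroup ≤ K ⊔ N.toSubgroup) N.isOpen
  have : Finite (Γ ⧸ (K ⊔ N.toSubgroup : Subgroup Γ)) :=
    Subgroup.quotient_finite_of_isOpen _ hMopen
  have hne : K ≠ K ⊔ N.toSubgroup := by
    intro h
    exact Subgroup.index_ne_zero_of_finite (H := K ⊔ N.toSubgroup) (h ▸ hind)
  obtain ⟨t, htM, htK⟩ := SetLike.exists_of_lt (lt_of_le_of_ne le_sup_left hne)
  obtain ⟨N₂, hN₂⟩ := aux_exists_openNormal_not_mem K hK htK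
  refine ⟨N ⊓ N₂, t, inf_le_left, htM, fun h => ?_⟩
  exact hN₂ (sup_le_sup_left (inf_le_right : (N ⊓ N₂).toSubgroup ≤ N₂.toSubgroup) K h)

/-- A closed subgroup of infinite index in a profinite group admits continuum many distinct
right cosets, witnessed by a map `p` from `ℕ → Bool`. -/
lemma aux_cantor (K : Subgroup Γ) (hK : IsClosed (K : Set Γ)) (hind : K.index = 0) :
    ∃ p : (ℕ → Bool) → Γ, ∀ a b : ℕ → Bool, p a * (p b)⁻¹ ∈ K → a = b := by
  choose f t hle htmem htnot using aux_step K hK hind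
  let Nseq : ℕ → OpenNormalSubgroup Γ := fun n =>
    Nat.rec ⟨⊤, ⟨fun n _ g => Subgroup.mem_top _⟩⟩ (fun _ ih => f ih) n
  let M : ℕ → Subgroup Γ := fun n => K ⊔ (Nseq n).toSubgroup
  have hMle : ∀ n, M (n + 1) ≤ M n := fun n => sup_le_sup_left (hle (Nseq n)) K
  have hKle : ∀ n, K ≤ M n := fun n => le_sup_left
  have ht1 : ∀ n, t (Nseq n) ∈ M n := fun n => htmem (Nseq n)
  have ht2 : ∀ n, t (Nseq n) ∉ M (n + 1) := fun n => htnot (Nseq n)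
  have hMopen : ∀ n, IsOpen ((M n : Subgroup Γ) : Set Γ) := fun n =>
    Subgroup.isOpen_mono (le_sup_right : (Nseq n).toSubgroup ≤ M n) (Nseq n).isOpen
  have hMclosed : ∀ n, IsClosed ((M n : Subgroup Γ) : Set Γ) := fun n =>
    (M n).isClosed_of_isOpen (hMopen n)
  -- partial products
  let u : (ℕ → Bool) → ℕ → Γ := fun a n => if a n then t (Nseq n) else 1
  have humem : ∀ a n, u a n ∈ M n := by
    intro a n
    by_cases h : a n <;> simp [u, h, one_mem, ht1 n]
  let g : (ℕ → Bool) → ℕ → Γ := fun a n => Nat.rec 1 (fun m ih => u a m * ih) n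
  have hgsucc : ∀ a n, g a (n + 1) = u a n * g a n := fun a n => rfl
  have hgdiff : ∀ a n, g a (n + 1) * (g a n)⁻¹ = u a n := by
    intro a n; rw [hgsucc]; group
  -- the nested closed sets
  let C : (ℕ → Bool) → ℕ → Set Γ := fun a n => {p : Γ | p * (g a n)⁻¹ ∈ M n}
  have hCsub : ∀ a n, C a (n + 1) ⊆ C a n := by
    intro a n p hp
    have key : p * (g a n)⁻¹ = (p * (g a (n + 1))⁻¹) * (g a (n + 1) * (g a n)⁻¹) := by group
    show p * (g a n)⁻¹ ∈ M n
    rw [key, hgdiff]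
    exact mul_mem (hMle n hp) (humem a n)
  have hCne : ∀ a n, (C a n).Nonempty := by
    intro a n
    exact ⟨g a n, by simp [C, one_mem]⟩
  have hCclosed : ∀ a n, IsClosed (C a n) := fun a n =>
    (hMclosed n).preimage (continuous_mul_right (g a n)⁻¹)
  have hiC : ∀ a, (⋂ n, C a n).Nonempty := by
    intro a
    exact IsCompact.nonempty_iInter_of_sequence_nonempty_isCompact_isClosed (C a)
      (hCsub a) (hCne a) ((hCclosed a 0).isCompact) (hCclosed a)
  choose p hp using hiC
  refine ⟨p, fun a b hab => ?_⟩
  by_contra hne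
  have hex : ∃ n, a n ≠ b n := Function.ne_iff.mp hne
  let j := Nat.find hex
  have hj : a j ≠ b j := Nat.find_spec hex
  have hmin : ∀ i < j, a i = b i := fun i hi => by
    have := Nat.find_min hex hi; simpa using this
  have hgeq : ∀ n, (∀ i < n, a i = b i) → g a n = g b n := by
    intro n
    induction n with
    | zero => intro _; rfl
    | succ m ihm =>
      intro h
      rw [hgsucc, hgsucc, ihm (fun i hi => h i (Nat.lt_succ_of_lt hi))]
      have : a m = b m := h m (Nat.lt_succ_self m)
      simp only [u, this]
  have hpaC : p a ∈ C a (j + 1) := Set.mem_iInter.mp (hp a) (j + 1)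
  have hpbC : p b ∈ C b (j + 1) := Set.mem_iInter.mp (hp b) (j + 1)
  have key : g a (j + 1) * (g b (j + 1))⁻¹ =
      (p a * (g a (j + 1))⁻¹)⁻¹ * (p a * (p b)⁻¹) * (p b * (g b (j + 1))⁻¹) := by group
  have hmem : g a (j + 1) * (g b (j + 1))⁻¹ ∈ M (j + 1) := by
    rw [key]
    exact mul_mem (mul_mem (inv_mem hpaC) (hKle (j + 1) hab)) hpbC
  have heq2 : g a (j + 1) * (g b (j + 1))⁻¹ = u a j * (u b j)⁻¹ := by
    rw [hgsucc, hgsucc, hgeq j hmin]; group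
  rw [heq2] at hmem
  rcases Bool.eq_false_or_eq_true (a j) with ha | ha <;>
    rcases Bool.eq_false_or_eq_true (b j) with hb | hb
  · exact hj (ha.trans hb.symm)
  · simp only [u, ha, hb, if_true, if_false] at hmem
    exact ht2 j (by simpa using inv_mem hmem)
  · simp only [u, ha, hb, if_true, if_false] at hmem
    exact ht2 j (by simpa using hmem)
  · exact hj (ha.trans hb.symm)

end Aux

/-- If `G` is profinite, `H` a closed subgroup, `x ∈ G`, and the set of
commutators `{[x,h] : h ∈ H}` has cardinality less than `2^ℵ₀`, then
`C_H(x)` has finite index in `H`. -/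
theorem stmt_14 {G : Type*} [Group G] [TopologicalSpace G] [IsTopologicalGroup G]
    [CompactSpace G] [T2Space G] [TotallyDisconnectedSpace G]
    (H : Subgroup G) (hH : IsClosed (H : Set G)) (x : G)
    (hcard : Cardinal.mk {z : G | ∃ h ∈ H, z = x⁻¹ * h⁻¹ * x * h} <
      Cardinal.continuum) :
    (Subgroup.centralizer {x}).relIndex H ≠ 0 := by
  intro hrel
  haveI : CompactSpace H := isCompact_iff_compactSpace.mp hH.isCompact
  set K : Subgroup H := (Subgroup.centralizer {x}).subgroupOf H with hKdef
  have hcent : IsClosed ((Subgroup.centralizer {x} : Subgroup G) : Set G) := by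
    have hset : ((Subgroup.centralizer {x} : Subgroup G) : Set G) = {g : G | x * g = g * x} := by
      ext g
      simp [Subgroup.mem_centralizer_iff]
    rw [hset]
    exact isClosed_eq (continuous_const.mul continuous_id) (continuous_id.mul continuous_const)
  have hKclosed : IsClosed (K : Set H) := by
    have : (K : Set H) = (Subtype.val : H → G) ⁻¹' (Subgroup.centralizer {x} : Set G) := rfl
    rw [this]
    exact hcent.preimage continuous_subtype_val
  have hind : K.index = 0 := hrel
  obtain ⟨p, hp⟩ := aux_cantor K hKclosed hind
  -- the injection into the set of commutators
  let S : Set G := {z : G | ∃ h ∈ H, z = x⁻¹ * h⁻¹ * x * h}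
  let F : (ℕ → Bool) → S := fun a =>
    ⟨x⁻¹ * (↑(p a))⁻¹ * x * ↑(p a), ⟨↑(p a), (p a).2, rfl⟩⟩
  have hFinj : Function.Injective F := by
    intro a b hab
    apply hp a b
    have h1 : x⁻¹ * (↑(p a))⁻¹ * x * ↑(p a) = x⁻¹ * (↑(p b))⁻¹ * x * ↑(p b) :=
      congrArg Subtype.val hab
    set A : G := (↑(p a) : G)
    set B : G := (↑(p b) : G)
    have h1' : A⁻¹ * x * A = B⁻¹ * x * B :=
      mul_left_cancel (a := x⁻¹) (by simpa [mul_assoc] using h1)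
    have hcomm : x * (A * B⁻¹) = (A * B⁻¹) * x := by
      calc x * (A * B⁻¹) = A * (A⁻¹ * x * A) * B⁻¹ := by group
        _ = A * (B⁻¹ * x * B) * B⁻¹ := by rw [h1']
        _ = (A * B⁻¹) * x := by group
    rw [hKdef, Subgroup.mem_subgroupOf, Subgroup.mem_centralizer_iff]
    intro y hy
    rw [Set.mem_singleton_iff] at hy
    subst hy
    simpa using hcomm
  have hmk : Cardinal.mk (ℕ → Bool) = Cardinal.continuum := by
    rw [Cardinal.mk_arrow]
    simp [Cardinal.two_power_aleph0]
  have hle : Cardinal.continuum ≤ Cardinal.mk S := by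
    have hF' := Cardinal.lift_mk_le'.mpr ⟨⟨F, hFinj⟩⟩
    rw [hmk, Cardinal.lift_continuum] at hF'
    simpa using hF'
  exact absurd hcard (not_lt.mpr hle)
end

section
/- Let G be a pronilpotent profinite group. Then every commutator [g,h] in G is an anti-coprime commutator: there exist g₁, h₁ ∈ G with [g,h] = [g₁,h₁] and π(g₁) = π(h₁). -/
/-- The set `π(x)` of primes dividing the (Steinitz) order of the procyclic
subgroup topologically generated by `x`: the primes `p` dividing the order of
the image of `x` in some finite continuous quotient. -/
def primesOf {G : Type*} [Group G] [TopologicalSpace G] (x : G) : Set ℕ :=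
  {p : ℕ | p.Prime ∧ ∃ (H : Type) (_ : Group H) (_ : Finite H) (f : G →* H),
    @Continuous _ _ _ ⊥ f ∧ p ∣ orderOf (f x)}


-- combined

open Classical in
noncomputable def partAux (P : ℕ → Prop) (M : ℕ) : ℕ :=
  ∏ p ∈ M.primeFactors, if P p then p ^ M.factorization p else 1

theorem partAux_mul_not (P : ℕ → Prop) {M : ℕ} (hM : M ≠ 0) :
    partAux P M * partAux (fun p => ¬ P p) M = M := by
  classical
  unfold partAux
  rw [← Finset.prod_mul_distrib]
  have : ∀ p ∈ M.primeFactors,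
      ((if P p then p ^ M.factorization p else 1) *
          @ite ℕ ((fun p => ¬ P p) p) (Classical.propDecidable _) (p ^ M.factorization p) 1)
        = p ^ M.factorization p := by
    intro p _
    by_cases hP : P p <;> simp [hP]
  
  refine (Finset.prod_congr rfl this).trans ?_
  conv_rhs => rw [← Nat.factorization_prod_pow_eq_self hM]
  rw [Nat.prod_factorization_eq_prod_primeFactors]

theorem coprime_partAux (P : ℕ → Prop) (M : ℕ) :
    Nat.Coprime (partAux P M) (partAux (fun p => ¬ P p) M) := by
  classical
  unfold partAux
  apply Nat.Coprime.prod_left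
  intro p hp
  apply Nat.Coprime.prod_right
  intro q hq
  by_cases hP : P p
  · by_cases hQ : P q
    · simp [hQ]
    · have hp' := Nat.prime_of_mem_primeFactors hp
      have hq' := Nat.prime_of_mem_primeFactors hq
      have hne : p ≠ q := fun e => hQ (e ▸ hP)
      simp only [if_pos hP, if_pos hQ]
      exact Nat.Coprime.pow _ _ ((Nat.coprime_primes hp' hq').2 hne)
  · simp [hP, Nat.coprime_one_left]

theorem partAux_dvd (P : ℕ → Prop) {M : ℕ} (hM : M ≠ 0) : partAux P M ∣ M :=
  ⟨_, (partAux_mul_not P hM).symm⟩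

theorem prime_dvd_partAux_iff {P : ℕ → Prop} {q M : ℕ} (hq : q.Prime) (hM : M ≠ 0) :
    q ∣ partAux P M ↔ q ∣ M ∧ P q := by
  classical
  unfold partAux
  constructor
  · intro hdvd
    obtain ⟨p, hp, hqp⟩ := (Prime.dvd_finset_prod_iff hq.prime _).1 hdvd
    by_cases hP : P p
    · rw [if_pos hP] at hqp
      have : q = p := ((Nat.prime_dvd_prime_iff_eq hq (Nat.prime_of_mem_primeFactors hp)).1
        (hq.dvd_of_dvd_pow hqp))
      subst this
      exact ⟨Nat.dvd_of_mem_primeFactors hp, hP⟩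
    · rw [if_neg hP] at hqp
      exact absurd (Nat.le_of_dvd one_pos hqp) hq.one_lt.not_ge
  · rintro ⟨hdvd, hPq⟩
    have hmem : q ∈ M.primeFactors := Nat.mem_primeFactors.2 ⟨hq, hdvd, hM⟩
    refine dvd_trans ?_ (Finset.dvd_prod_of_mem _ hmem)
    rw [if_pos hPq]
    exact dvd_pow_self q (hq.factorization_pos_of_dvd hM hdvd).ne'

theorem partAux_dvd_partAux (P : ℕ → Prop) {M N : ℕ} (h : M ∣ N) (hN : N ≠ 0) :
    partAux P M ∣ partAux P N := by
  classical
  have hM : M ≠ 0 := fun e => hN (by simpa [e] using h)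
  unfold partAux
  calc (∏ p ∈ M.primeFactors, if P p then p ^ M.factorization p else 1)
      ∣ ∏ p ∈ M.primeFactors, if P p then p ^ N.factorization p else 1 := by
        apply Finset.prod_dvd_prod_of_dvd
        intro p _
        by_cases hP : P p
        · simp only [if_pos hP]
          exact pow_dvd_pow p (((Nat.factorization_le_iff_dvd hM hN).2 h) p)
        · simp [hP]
    _ ∣ ∏ p ∈ N.primeFactors, if P p then p ^ N.factorization p else 1 := by
        apply Finset.prod_dvd_prod_of_subset
        exact Nat.primeFactors_mono h hN

theorem partAux_ne_zero (P : ℕ → Prop) (M : ℕ) : partAux P M ≠ 0 := by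
  classical
  unfold partAux
  refine Finset.prod_ne_zero_iff.2 fun p hp => ?_
  by_cases hP : P p
  · simp only [if_pos hP]
    exact pow_ne_zero _ (Nat.prime_of_mem_primeFactors hp).pos.ne'
  · simp [hP]

theorem pow_comm_aux {H : Type*} [Group H] (a b : H)
    (hz : a * b * a⁻¹ * b⁻¹ ∈ Subgroup.center H) :
    ∀ n : ℕ, a ^ n * b * a⁻¹ ^ n * b⁻¹ = (a * b * a⁻¹ * b⁻¹) ^ n := by
  intro n
  induction n with
  | zero => simp
  | succ n ih =>
    have hc : ∀ g : H, g * (a * b * a⁻¹ * b⁻¹) ^ n = (a * b * a⁻¹ * b⁻¹) ^ n * g :=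
      fun g => Subgroup.mem_center_iff.1 (pow_mem hz n) g
    have h1 : a ^ (n + 1) * b * a⁻¹ ^ (n + 1) * b⁻¹
        = a * (a ^ n * b * a⁻¹ ^ n * b⁻¹) * (b * a⁻¹ * b⁻¹) := by group
    rw [h1, ih, hc a, pow_succ]
    group

universe u

theorem commute_of_coprime_aux : ∀ (n : ℕ) {H : Type u} [Group H] [Group.IsNilpotent H],
    Group.nilpotencyClass H ≤ n → ∀ a b : H, orderOf a ≠ 0 → orderOf b ≠ 0 →
    Nat.Coprime (orderOf a) (orderOf b) → Commute a b := by
  intro n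
  induction n with
  | zero =>
    intro H _ _ hc a b _ _ _
    have : Subsingleton H := nilpotencyClass_zero_iff_subsingleton.1 (Nat.le_zero.1 hc)
    exact Subsingleton.elim _ _
  | succ n ih =>
    intro H _ _ hc a b ha hb hco
    set Z := Subgroup.center H
    let f := QuotientGroup.mk' Z
    have hclass : Group.nilpotencyClass (H ⧸ Z) ≤ n := by
      rw [nilpotencyClass_quotient_center]
      omega
    have hA : orderOf (f a) ∣ orderOf a := orderOf_map_dvd f a
    have hB : orderOf (f b) ∣ orderOf b := orderOf_map_dvd f b
    have ha' : orderOf (f a) ≠ 0 := fun e => ha (Nat.zero_dvd.1 (e ▸ hA))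
    have hb' : orderOf (f b) ≠ 0 := fun e => hb (Nat.zero_dvd.1 (e ▸ hB))
    have hcm : Commute (f a) (f b) :=
      ih hclass (f a) (f b) ha' hb' ((hco.coprime_dvd_left hA).coprime_dvd_right hB)
    have hz : a * b * a⁻¹ * b⁻¹ ∈ Z := by
      rw [← QuotientGroup.eq_one_iff]
      have : f (a * b * a⁻¹ * b⁻¹) = f a * f b * (f a)⁻¹ * (f b)⁻¹ := by
        simp [map_mul, map_inv]
      have h2 : f a * f b * (f a)⁻¹ * (f b)⁻¹ = 1 := by
        rw [hcm]; group
      rw [← QuotientGroup.mk'_apply, this, h2]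
    set z := a * b * a⁻¹ * b⁻¹ with hzdef
    have hz1 : z ^ orderOf a = 1 := by
      rw [← pow_comm_aux a b hz (orderOf a), pow_orderOf_eq_one, inv_pow,
        pow_orderOf_eq_one]
      group
    have hz' : b * a * b⁻¹ * a⁻¹ ∈ Z := by
      have : b * a * b⁻¹ * a⁻¹ = z⁻¹ := by rw [hzdef]; group
      rw [this]
      exact inv_mem hz
    have hz2 : z ^ orderOf b = 1 := by
      have h3 : (b * a * b⁻¹ * a⁻¹) ^ orderOf b = 1 := by
        rw [← pow_comm_aux b a hz' (orderOf b), pow_orderOf_eq_one, inv_pow,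
          pow_orderOf_eq_one]
        group
      have h4 : (b * a * b⁻¹ * a⁻¹) = z⁻¹ := by rw [hzdef]; group
      rw [h4, inv_pow, inv_eq_one] at h3
      exact h3
    have : orderOf z ∣ Nat.gcd (orderOf a) (orderOf b) :=
      Nat.dvd_gcd (orderOf_dvd_of_pow_eq_one hz1) (orderOf_dvd_of_pow_eq_one hz2)
    rw [hco] at this
    have hzone : z = 1 := orderOf_eq_one_iff.1 (Nat.dvd_one.1 this)
    show a * b = b * a
    calc a * b = (a * b * a⁻¹ * b⁻¹) * (b * a) := by group
      _ = 1 * (b * a) := by rw [← hzdef, hzone]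
      _ = b * a := one_mul _

theorem comm_reduce {H : Type*} [Group H] (a₁ a₂ b₁ b₂ : H)
    (h0 : Commute a₁ a₂) (h5 : Commute b₁ b₂)
    (h1 : Commute a₂ b₁) (h2 : Commute a₂ b₂) (h3 : Commute b₂ a₁) :
    (a₁ * a₂)⁻¹ * (b₁ * b₂)⁻¹ * (a₁ * a₂) * (b₁ * b₂) = a₁⁻¹ * b₁⁻¹ * a₁ * b₁ := by
  have c1 : Commute a₂ (b₁ * b₂) := h1.mul_right h2
  have cc : Commute b₂ (b₁⁻¹ * (a₁ * b₁)) :=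
    (h5.symm.inv_right).mul_right (h3.mul_right h5.symm)
  have cX : Commute a₂ (a₁⁻¹ * (b₁⁻¹ * (a₁ * b₁))) :=
    (h0.symm.inv_right).mul_right ((h1.inv_right).mul_right ((h0.symm).mul_right h1))
  calc (a₁ * a₂)⁻¹ * (b₁ * b₂)⁻¹ * (a₁ * a₂) * (b₁ * b₂)
      = a₂⁻¹ * ((a₁⁻¹ * (b₁ * b₂)⁻¹ * a₁) * (a₂ * (b₁ * b₂))) := by group
    _ = a₂⁻¹ * ((a₁⁻¹ * (b₁ * b₂)⁻¹ * a₁) * ((b₁ * b₂) * a₂)) := by rw [c1.eq]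
    _ = a₂⁻¹ * ((a₁⁻¹ * (b₂⁻¹ * (b₁⁻¹ * (a₁ * b₁)) * b₂)) * a₂) := by group
    _ = a₂⁻¹ * ((a₁⁻¹ * ((b₁⁻¹ * (a₁ * b₁)) * b₂⁻¹ * b₂)) * a₂) := by
        rw [cc.inv_left.eq]
    _ = a₂⁻¹ * ((a₁⁻¹ * (b₁⁻¹ * (a₁ * b₁))) * a₂) := by group
    _ = a₂⁻¹ * (a₂ * (a₁⁻¹ * (b₁⁻¹ * (a₁ * b₁)))) := by rw [← cX.eq]
    _ = a₁⁻¹ * b₁⁻¹ * a₁ * b₁ := by group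

def memP (π : Set ℕ) : ℕ → Prop := fun p => p ∈ π

theorem commutator_split {H : Type u} [Group H] [Finite H] [Group.IsNilpotent H]
    (a b : H) (πa πb : Set ℕ)
    (hA : ∀ p : ℕ, p.Prime → p ∣ orderOf a → p ∈ πa)
    (hB : ∀ p : ℕ, p.Prime → p ∣ orderOf b → p ∈ πb)
    {c d : ℕ}
    (hc1 : c ≡ 1 [MOD partAux (memP πb) (orderOf a)])
    (hc0 : c ≡ 0 [MOD partAux (fun p => ¬ memP πb p) (orderOf a)])
    (hd1 : d ≡ 1 [MOD partAux (memP πa) (orderOf b)])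
    (hd0 : d ≡ 0 [MOD partAux (fun p => ¬ memP πa p) (orderOf b)]) :
    a⁻¹ * b⁻¹ * a * b = (a ^ c)⁻¹ * (b ^ d)⁻¹ * (a ^ c) * (b ^ d) := by
  have hMa : orderOf a ≠ 0 := (orderOf_pos a).ne'
  have hMb : orderOf b ≠ 0 := (orderOf_pos b).ne'
  obtain ⟨c', hc'0, hc'1⟩ := Nat.chineseRemainder (coprime_partAux (memP πb) (orderOf a)) 0 1
  obtain ⟨d', hd'0, hd'1⟩ := Nat.chineseRemainder (coprime_partAux (memP πa) (orderOf b)) 0 1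
  -- splitting of a
  have hsplit_a : a = a ^ c * a ^ c' := by
    rw [← pow_add]
    conv_lhs => rw [show a = a ^ 1 from (pow_one a).symm]
    symm
    rw [pow_eq_pow_iff_modEq]
    have := (Nat.modEq_and_modEq_iff_modEq_mul
      (coprime_partAux (memP πb) (orderOf a))).1 ⟨hc1.add hc'0, hc0.add hc'1⟩
    rw [partAux_mul_not _ hMa] at this
    simpa using this
  have hsplit_b : b = b ^ d * b ^ d' := by
    rw [← pow_add]
    conv_lhs => rw [show b = b ^ 1 from (pow_one b).symm]
    symm
    rw [pow_eq_pow_iff_modEq]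
    have := (Nat.modEq_and_modEq_iff_modEq_mul
      (coprime_partAux (memP πa) (orderOf b))).1 ⟨hd1.add hd'0, hd0.add hd'1⟩
    rw [partAux_mul_not _ hMb] at this
    simpa using this
  -- order divisibility
  have horda : orderOf (a ^ c') ∣ partAux (fun p => ¬ memP πb p) (orderOf a) := by
    apply orderOf_dvd_of_pow_eq_one
    rw [← pow_mul]
    have h0 : c' * partAux (fun p => ¬ memP πb p) (orderOf a) ≡ 0 [MOD orderOf a] := by
      rw [Nat.modEq_zero_iff_dvd]
      have hd : partAux (memP πb) (orderOf a) ∣ c' := Nat.modEq_zero_iff_dvd.mp hc'0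
      have := Nat.mul_dvd_mul hd (dvd_refl (partAux (fun p => ¬ memP πb p) (orderOf a)))
      rwa [partAux_mul_not (memP πb) hMa] at this
    calc a ^ (c' * partAux (fun p => ¬ memP πb p) (orderOf a)) = a ^ 0 := by
          rw [pow_eq_pow_iff_modEq]; exact h0
      _ = 1 := pow_zero a
  have hordb : orderOf (b ^ d') ∣ partAux (fun p => ¬ memP πa p) (orderOf b) := by
    apply orderOf_dvd_of_pow_eq_one
    rw [← pow_mul]
    have h0 : d' * partAux (fun p => ¬ memP πa p) (orderOf b) ≡ 0 [MOD orderOf b] := by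
      rw [Nat.modEq_zero_iff_dvd]
      have hd : partAux (memP πa) (orderOf b) ∣ d' := Nat.modEq_zero_iff_dvd.mp hd'0
      have := Nat.mul_dvd_mul hd (dvd_refl (partAux (fun p => ¬ memP πa p) (orderOf b)))
      rwa [partAux_mul_not (memP πa) hMb] at this
    calc b ^ (d' * partAux (fun p => ¬ memP πa p) (orderOf b)) = b ^ 0 := by
          rw [pow_eq_pow_iff_modEq]; exact h0
      _ = 1 := pow_zero b
  -- coprimality and commuting
  have kab : Commute (a ^ c') b := by
    apply commute_of_coprime_aux (Group.nilpotencyClass H) le_rfl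
    · exact (orderOf_pos _).ne'
    · exact hMb
    · by_contra hnc
      obtain ⟨p, hp, hp1, hp2⟩ := Nat.Prime.not_coprime_iff_dvd.1 hnc
      have := (prime_dvd_partAux_iff hp hMa).1 (hp1.trans horda)
      exact this.2 (hB p hp hp2)
  have kba : Commute (b ^ d') a := by
    apply commute_of_coprime_aux (Group.nilpotencyClass H) le_rfl
    · exact (orderOf_pos _).ne'
    · exact hMa
    · by_contra hnc
      obtain ⟨p, hp, hp1, hp2⟩ := Nat.Prime.not_coprime_iff_dvd.1 hnc
      have := (prime_dvd_partAux_iff hp hMb).1 (hp1.trans hordb)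
      exact this.2 (hA p hp hp2)
  conv_lhs => rw [hsplit_a, hsplit_b]
  exact comm_reduce _ _ _ _ (Commute.pow_pow_self a c c') (Commute.pow_pow_self b d d')
    (kab.pow_right d) (kab.pow_right d') (kba.pow_right c)





theorem exists_finite_quotient_ne {G : Type u} [Group G] [TopologicalSpace G]
    [IsTopologicalGroup G] [CompactSpace G] [T2Space G] [TotallyDisconnectedSpace G]
    {x y : G} (hxy : x ≠ y) :
    ∃ (H : Type) (_ : Group H) (_ : Finite H) (f : G →* H),
      @Continuous _ _ _ ⊥ f ∧ Function.Surjective f ∧ f x ≠ f y := by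
  have h1 : x⁻¹ * y ≠ 1 := by
    rw [Ne, inv_mul_eq_one]
    exact hxy
  have h1' : (1 : G) ∈ ({x⁻¹ * y}ᶜ : Set G) := by simpa using h1.symm
  obtain ⟨V, hV, h1V, hVU⟩ :=
    compact_exists_isClopen_in_isOpen isOpen_compl_singleton h1'
  obtain ⟨N, hN⟩ := IsTopologicalGroup.exist_openNormalSubgroup_sub_clopen_nhds_of_one hV h1V
  haveI : Finite (G ⧸ N.toSubgroup) :=
    Subgroup.quotient_finite_of_isOpen N.toSubgroup N.isOpen'
  haveI : DiscreteTopology (G ⧸ N.toSubgroup) :=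
    QuotientGroup.discreteTopology N.isOpen'
  haveI : Small.{0} (G ⧸ N.toSubgroup) := by infer_instance
  refine ⟨Shrink.{0} (G ⧸ N.toSubgroup), inferInstance, inferInstance,
    ((Shrink.mulEquiv).symm.toMonoidHom.comp (QuotientGroup.mk' N.toSubgroup)), ?_, ?_, ?_⟩
  · letI : TopologicalSpace (Shrink.{0} (G ⧸ N.toSubgroup)) := ⊥
    haveI : DiscreteTopology (Shrink.{0} (G ⧸ N.toSubgroup)) := discreteTopology_bot _
    rw [MonoidHom.coe_comp]
    exact Continuous.comp continuous_of_discreteTopology continuous_quotient_mk'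
  · intro z
    obtain ⟨w, hw⟩ := QuotientGroup.mk'_surjective N.toSubgroup (Shrink.mulEquiv z)
    exact ⟨w, by simp [MonoidHom.comp_apply, hw]⟩
  · intro he
    have he' : QuotientGroup.mk' N.toSubgroup x = QuotientGroup.mk' N.toSubgroup y :=
      (Shrink.mulEquiv.symm.injective) (by simpa [MonoidHom.comp_apply] using he)
    have : x⁻¹ * y ∈ N.toSubgroup := QuotientGroup.eq.1 he'
    exact (hVU (hN this)) rfl


set_option maxHeartbeats 1000000 in
theorem exists_ultrafilter_forall_mem {α : Type*} {ι : Type*} [Nonempty ι] (S : ι → Set α)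
    (hdir : ∀ i j, ∃ k, S k ⊆ S i ∧ S k ⊆ S j) (hne : ∀ i, (S i).Nonempty) :
    ∃ U : Ultrafilter α, ∀ i, S i ∈ U := by
  haveI : Nonempty α := ⟨(hne (Classical.arbitrary ι)).choose⟩
  haveI hFne : (⨅ i, Filter.principal (S i)).NeBot := by
    apply Filter.iInf_neBot_of_directed
    · intro i j
      obtain ⟨k, h1, h2⟩ := hdir i j
      exact ⟨k, Filter.principal_mono.2 h1, Filter.principal_mono.2 h2⟩
    · intro i
      exact Filter.principal_neBot_iff.2 (hne i)
  refine ⟨Ultrafilter.of (⨅ i, Filter.principal (S i)), fun i => ?_⟩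
  exact Ultrafilter.of_le (⨅ i, Filter.principal (S i))
    (Filter.mem_iInf_of_mem i (Filter.mem_principal_self _))

theorem exists_part {G : Type u} [Group G] [TopologicalSpace G] [IsTopologicalGroup G]
    [CompactSpace G] (g : G) (π : Set ℕ) :
    ∃ g₁ : G, ∀ (H : Type) (_ : Group H) (_ : Finite H) (f : G →* H),
      @Continuous _ _ _ ⊥ f → ∃ c : ℕ,
        c ≡ 1 [MOD partAux (memP π) (orderOf (f g))] ∧
        c ≡ 0 [MOD partAux (fun p => ¬ memP π p) (orderOf (f g))] ∧
        f g₁ = (f g) ^ c := by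
  set S : {M : ℕ // M ≠ 0} → Set ℕ := fun M =>
    {e | e ≡ 1 [MOD partAux (memP π) M.1] ∧ e ≡ 0 [MOD partAux (fun p => ¬ memP π p) M.1]}
    with hS
  have hsub : ∀ (M N : {M : ℕ // M ≠ 0}), M.1 ∣ N.1 → S N ⊆ S M := by
    rintro M N hdvd e ⟨he1, he0⟩
    exact ⟨he1.of_dvd (partAux_dvd_partAux _ hdvd N.2),
      he0.of_dvd (partAux_dvd_partAux _ hdvd N.2)⟩
  have hne : ∀ M : {M : ℕ // M ≠ 0}, (S M).Nonempty := by
    intro M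
    obtain ⟨c, hc1, hc0⟩ := Nat.chineseRemainder (coprime_partAux (memP π) M.1) 1 0
    exact ⟨c, hc1, hc0⟩
  haveI : Nonempty {M : ℕ // M ≠ 0} := ⟨⟨1, one_ne_zero⟩⟩
  obtain ⟨U, hU⟩ := exists_ultrafilter_forall_mem S
    (fun M N => ⟨⟨M.1 * N.1, mul_ne_zero M.2 N.2⟩,
      hsub _ _ (dvd_mul_right _ _), hsub _ _ (dvd_mul_left _ _)⟩) hne
  obtain ⟨g₁, -, hg₁⟩ := isCompact_univ.ultrafilter_le_nhds' (U.map (fun e => g ^ e))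
    Filter.univ_mem
  refine ⟨g₁, ?_⟩
  intro H _ _ f hf
  letI : TopologicalSpace H := ⊥
  haveI : DiscreteTopology H := discreteTopology_bot H
  have htend : Filter.Tendsto (fun e => f (g ^ e)) (U : Filter ℕ) (nhds (f g₁)) :=
    (hf.tendsto g₁).comp hg₁
  rw [nhds_discrete, Filter.tendsto_pure] at htend
  have hM : orderOf (f g) ≠ 0 := (orderOf_pos (f g)).ne'
  have hmemS : S ⟨orderOf (f g), hM⟩ ∈ (U : Filter ℕ) := hU _
  obtain ⟨c, hcS, hcf⟩ := Ultrafilter.nonempty_of_mem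
    (Filter.inter_mem hmemS (htend : {e | f (g ^ e) = f g₁} ∈ (U : Filter ℕ)))
  exact ⟨c, hcS.1, hcS.2, by rw [← hcf, map_pow]⟩


theorem orderOf_pow_part {H : Type*} [Group H] [Finite H] (a : H) {π : Set ℕ} {c : ℕ}
    (hc1 : c ≡ 1 [MOD partAux (memP π) (orderOf a)])
    (hc0 : c ≡ 0 [MOD partAux (fun p => ¬ memP π p) (orderOf a)]) :
    orderOf (a ^ c) = partAux (memP π) (orderOf a) := by
  have hM : orderOf a ≠ 0 := (orderOf_pos a).ne'
  apply Nat.dvd_antisymm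
  · apply orderOf_dvd_of_pow_eq_one
    rw [← pow_mul]
    rw [← orderOf_dvd_iff_pow_eq_one]
    have h2 : partAux (fun p => ¬ memP π p) (orderOf a) ∣ c := Nat.modEq_zero_iff_dvd.mp hc0
    calc orderOf a = partAux (memP π) (orderOf a) * partAux (fun p => ¬ memP π p) (orderOf a) :=
          (partAux_mul_not _ hM).symm
      _ ∣ partAux (memP π) (orderOf a) * c := mul_dvd_mul_left _ h2
      _ = c * partAux (memP π) (orderOf a) := mul_comm _ _
  · have hk : a ^ (c * orderOf (a ^ c)) = 1 := by
      rw [pow_mul]; exact pow_orderOf_eq_one _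
    have h3 : orderOf a ∣ c * orderOf (a ^ c) := orderOf_dvd_of_pow_eq_one hk
    have h4 : partAux (memP π) (orderOf a) ∣ c * orderOf (a ^ c) :=
      dvd_trans (partAux_dvd _ hM) h3
    have h5 : Nat.Coprime c (partAux (memP π) (orderOf a)) := by
      have := hc1.gcd_eq
      rwa [Nat.gcd_one_left] at this
    exact (Nat.Coprime.dvd_of_dvd_mul_left h5.symm h4)

theorem primesOf_part {G : Type*} [Group G] [TopologicalSpace G] (g g₁ : G) (π : Set ℕ)
    (hg₁ : ∀ (H : Type) (_ : Group H) (_ : Finite H) (f : G →* H),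
      @Continuous _ _ _ ⊥ f → ∃ c : ℕ,
        c ≡ 1 [MOD partAux (memP π) (orderOf (f g))] ∧
        c ≡ 0 [MOD partAux (fun p => ¬ memP π p) (orderOf (f g))] ∧
        f g₁ = (f g) ^ c) :
    primesOf g₁ = primesOf g ∩ π := by
  ext p
  constructor
  · rintro ⟨hp, H, iG, iF, f, hf, hdvd⟩
    letI := iG; letI := iF
    obtain ⟨c, hc1, hc0, he⟩ := hg₁ H iG iF f hf
    rw [he, orderOf_pow_part (f g) hc1 hc0] at hdvd
    have hM : orderOf (f g) ≠ 0 := (orderOf_pos (f g)).ne'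
    have := (prime_dvd_partAux_iff hp hM).1 hdvd
    exact ⟨⟨hp, H, iG, iF, f, hf, this.1⟩, this.2⟩
  · rintro ⟨⟨hp, H, iG, iF, f, hf, hdvd⟩, hpπ⟩
    letI := iG; letI := iF
    obtain ⟨c, hc1, hc0, he⟩ := hg₁ H iG iF f hf
    refine ⟨hp, H, iG, iF, f, hf, ?_⟩
    rw [he, orderOf_pow_part (f g) hc1 hc0]
    have hM : orderOf (f g) ≠ 0 := (orderOf_pos (f g)).ne'
    exact (prime_dvd_partAux_iff hp hM).2 ⟨hdvd, hpπ⟩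



/-- In a pronilpotent profinite group (every continuous finite quotient is
nilpotent), every commutator is an anti-coprime commutator: for all `g, h`
there are `g₁, h₁` with `[g,h] = [g₁,h₁]` and `π(g₁) = π(h₁)`. -/
theorem stmt_19 {G : Type*} [Group G] [TopologicalSpace G] [IsTopologicalGroup G]
    [CompactSpace G] [T2Space G] [TotallyDisconnectedSpace G]
    (hpronil : ∀ (H : Type) (_ : Group H) (_ : Finite H) (f : G →* H),
      @Continuous _ _ _ ⊥ f → Function.Surjective f → Group.IsNilpotent H)
    (g h : G) :
    ∃ g₁ h₁ : G, g⁻¹ * h⁻¹ * g * h = g₁⁻¹ * h₁⁻¹ * g₁ * h₁ ∧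
      primesOf g₁ = primesOf h₁ := by
  obtain ⟨g₁, hg₁⟩ := exists_part g (primesOf h)
  obtain ⟨h₁, hh₁⟩ := exists_part h (primesOf g)
  refine ⟨g₁, h₁, ?_, ?_⟩
  · by_contra hne
    obtain ⟨H, iG, iF, f, hf, hsurj, hfe⟩ := exists_finite_quotient_ne hne
    letI := iG; letI := iF
    haveI : Group.IsNilpotent H := hpronil H iG iF f hf hsurj
    obtain ⟨c, hc1, hc0, hgc⟩ := hg₁ H iG iF f hf
    obtain ⟨d, hd1, hd0, hhc⟩ := hh₁ H iG iF f hf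
    apply hfe
    have e1 : f (g⁻¹ * h⁻¹ * g * h) = (f g)⁻¹ * (f h)⁻¹ * f g * f h := by
      simp [map_mul, map_inv]
    have e2 : f (g₁⁻¹ * h₁⁻¹ * g₁ * h₁) = (f g₁)⁻¹ * (f h₁)⁻¹ * f g₁ * f h₁ := by
      simp [map_mul, map_inv]
    rw [e1, e2, hgc, hhc]
    have hA : ∀ p : ℕ, p.Prime → p ∣ orderOf (f g) → p ∈ primesOf g :=
      fun p hp hd => ⟨hp, H, iG, iF, f, hf, hd⟩
    have hB : ∀ p : ℕ, p.Prime → p ∣ orderOf (f h) → p ∈ primesOf h :=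
      fun p hp hd => ⟨hp, H, iG, iF, f, hf, hd⟩
    exact commutator_split (f g) (f h) (primesOf g) (primesOf h) hA hB hc1 hc0 hd1 hd0
  · rw [primesOf_part g g₁ (primesOf h) hg₁, primesOf_part h h₁ (primesOf g) hh₁,
      Set.inter_comm]
end
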